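/- (Decreasing version of the monotonicity theorem) Let q, α ∈ (0,1), let n0 be an integer, and let y : ℤ → ℝ encode a function on T_q. Suppose y(n0) ≤ 0 and S_y(n) − S_y(n+1) ≤ 0 for every integer n < n0 (i.e. the Riemann q-fractional derivative (_q∇_{qa}^{α} y)(q^n) of order α based at qa, a = q^{n0}, is nonpositive at every point t = q^n with n < n0). Then y is c_q(α)-decreasing, i.e. y(n−1) ≤ c_q(α) · y(n) for every integer n ≤ n0. -/

import Mathlib

/-!
Write `(q^m - q^k)_q^{-α} = q^{-mα} P(k - m)` with
`P(r) = ∏_j (1 - q^{r+j}) / (1 - q^{r+j-α})`. Every factor is at least `1` and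
`P(r)` is its first factor times `P(r + 1)`, so the q-factorial power grows when `m` grows by one.
Hence, if `y ≤ 0` on `(n, n0]`, all terms of `S_y(n) - S_y(n+1)` beyond the first two are
nonnegative, while the first two equal `w (y(n) - c_q(α) y(n+1))` with `w > 0`, by the identity
`P(2)(1 - q) = P(1)(1 - q^{1-α})`. A nonpositive derivative thus gives `y(n) ≤ c_q(α) y(n+1)`,
and since `c_q(α) ≥ 0`, downward induction from `y(n0) ≤ 0` keeps `y` nonpositive throughout.
-/

/-- The q-factorial power `(q^m - q^k)_q^{-α}` for integers `m < k`, defined by the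
convergent infinite product
`q^{-mα} · ∏_{j=0}^∞ (1 - q^{k-m+j}) / (1 - q^{k-m+j-α})`. -/
noncomputable def qFac (q α : ℝ) (m k : ℤ) : ℝ :=
  q ^ (-(m : ℝ) * α) *
    ∏' j : ℕ, (1 - q ^ (((k - m : ℤ) : ℝ) + (j : ℝ))) /
      (1 - q ^ (((k - m : ℤ) : ℝ) + (j : ℝ) - α))

/-- `S q α n0 y n = Σ_{i=n}^{n0} q^i (q^n - q^{i+1})_q^{-α} y(i)`; for `n = n0 + 1`
the range is empty, so `S q α n0 y (n0+1) = 0`.  The Riemann q-fractional derivative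
of order `α` based at `qa = q^{n0+1}`, evaluated at `t = q^n`, is
`(S q α n0 y n - S q α n0 y (n+1)) / ((1-q) q^n Γ_q(1-α))`,
whose sign is that of `S q α n0 y n - S q α n0 y (n+1)`. -/
noncomputable def S (q α : ℝ) (n0 : ℤ) (y : ℤ → ℝ) (n : ℤ) : ℝ :=
  ∑ i ∈ Finset.Icc n n0, q ^ (i : ℝ) * qFac q α n (i + 1) * y i

noncomputable def qFacFactor (q α r : ℝ) (j : ℕ) : ℝ :=
  (1 - q ^ (r + j)) / (1 - q ^ (r + j - α))

noncomputable def qFacProd (q α r : ℝ) : ℝ :=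
  ∏' j : ℕ, qFacFactor q α r j

noncomputable def cq (q α : ℝ) : ℝ :=
  q ^ (1 - α) * (1 - q ^ α) / (1 - q)

lemma qFac_eq_rpow_mul_qFacProd (q α : ℝ) (m k : ℤ) :
    qFac q α m k = q ^ (-(m : ℝ) * α) * qFacProd q α ((k - m : ℤ) : ℝ) :=
  rfl

lemma cq_nonneg {q α : ℝ} (hq0 : 0 < q) (hq1 : q < 1) (hα : 0 ≤ α) : 0 ≤ cq q α := by
  have : q ^ α ≤ 1 := Real.rpow_le_one hq0.le hq1.le hα
  unfold cq
  exact div_nonneg (mul_nonneg (by positivity) (by linarith)) (by linarith)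

section qFacProd

variable {q α r : ℝ}

lemma rpow_add_natCast_sub_lt_one (hq0 : 0 < q) (hq1 : q < 1) (hαr : α < r) (j : ℕ) :
    q ^ (r + j - α) < 1 :=
  Real.rpow_lt_one hq0.le hq1 (by linarith [j.cast_nonneg (α := ℝ)])

lemma one_le_qFacFactor (hq0 : 0 < q) (hq1 : q < 1) (hα : 0 ≤ α) (hαr : α < r) (j : ℕ) :
    1 ≤ qFacFactor q α r j := by
  have : q ^ (r + j) ≤ q ^ (r + j - α) :=
    Real.rpow_le_rpow_of_exponent_ge hq0 hq1.le (by linarith)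
  rw [qFacFactor, one_le_div (sub_pos.2 (rpow_add_natCast_sub_lt_one hq0 hq1 hαr j))]
  linarith

lemma qFacFactor_sub_one_le (hq0 : 0 < q) (hq1 : q < 1) (hαr : α < r) (j : ℕ) :
    qFacFactor q α r j - 1 ≤ q ^ (r - α) / (1 - q ^ (r - α)) * q ^ j := by
  have hden : 0 < 1 - q ^ (r + j - α) := sub_pos.2 (rpow_add_natCast_sub_lt_one hq0 hq1 hαr j)
  have hden₀ : 0 < 1 - q ^ (r - α) := by simpa using rpow_add_natCast_sub_lt_one hq0 hq1 hαr 0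
  have hsplit : q ^ (r + j - α) = q ^ (r - α) * q ^ j := by
    rw [← Real.rpow_natCast, ← Real.rpow_add hq0]; ring_nf
  have hmono : q ^ (r + j - α) ≤ q ^ (r - α) :=
    Real.rpow_le_rpow_of_exponent_ge hq0 hq1.le (by linarith [j.cast_nonneg (α := ℝ)])
  calc qFacFactor q α r j - 1
      = (q ^ (r + j - α) - q ^ (r + j)) / (1 - q ^ (r + j - α)) := by
        rw [qFacFactor]; field_simp; ring
    _ ≤ q ^ (r + j - α) / (1 - q ^ (r - α)) :=
        div_le_div₀ (by positivity) (by linarith [Real.rpow_pos_of_pos hq0 (r + j)]) hden₀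
          (by linarith)
    _ = q ^ (r - α) / (1 - q ^ (r - α)) * q ^ j := by rw [hsplit]; ring

lemma summable_log_qFacFactor (hq0 : 0 < q) (hq1 : q < 1) (hα : 0 ≤ α) (hαr : α < r) :
    Summable fun j ↦ Real.log (qFacFactor q α r j) := by
  refine .of_nonneg_of_le (fun j ↦ Real.log_nonneg (one_le_qFacFactor hq0 hq1 hα hαr j))
    (fun j ↦ ?_)
    ((summable_geometric_of_lt_one hq0.le hq1).mul_left (q ^ (r - α) / (1 - q ^ (r - α))))
  have hpos : 0 < qFacFactor q α r j := one_pos.trans_le (one_le_qFacFactor hq0 hq1 hα hαr j)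
  exact (Real.log_le_sub_one_of_pos hpos).trans (qFacFactor_sub_one_le hq0 hq1 hαr j)

lemma hasProd_qFacFactor (hq0 : 0 < q) (hq1 : q < 1) (hα : 0 ≤ α) (hαr : α < r) :
    HasProd (qFacFactor q α r) (Real.exp (∑' j, Real.log (qFacFactor q α r j))) :=
  Real.hasProd_of_hasSum_log
    (fun j ↦ one_pos.trans_le (one_le_qFacFactor hq0 hq1 hα hαr j))
    (summable_log_qFacFactor hq0 hq1 hα hαr).hasSum

lemma one_le_qFacProd (hq0 : 0 < q) (hq1 : q < 1) (hα : 0 ≤ α) (hαr : α < r) :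
    1 ≤ qFacProd q α r := by
  rw [qFacProd, (hasProd_qFacFactor hq0 hq1 hα hαr).tprod_eq]
  exact Real.one_le_exp (tsum_nonneg fun j ↦
    Real.log_nonneg (one_le_qFacFactor hq0 hq1 hα hαr j))

lemma qFacProd_eq_mul (hq0 : 0 < q) (hq1 : q < 1) (hα : 0 ≤ α) (hαr : α < r) :
    qFacProd q α r = qFacFactor q α r 0 * qFacProd q α (r + 1) := by
  have hshift : ∀ j : ℕ, qFacFactor q α r (j + 1) = qFacFactor q α (r + 1) j := fun j ↦ by
    simp only [qFacFactor, Nat.cast_add, Nat.cast_one, add_comm (j : ℝ) 1, add_assoc]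
  have htail : Multipliable fun j ↦ qFacFactor q α r (j + 1) := by
    simpa only [hshift] using
      (hasProd_qFacFactor hq0 hq1 hα (by linarith : α < r + 1)).multipliable
  rw [qFacProd, tprod_eq_zero_mul' htail, qFacProd, tprod_congr hshift]

lemma qFacProd_add_one_le (hq0 : 0 < q) (hq1 : q < 1) (hα : 0 ≤ α) (hαr : α < r) :
    qFacProd q α (r + 1) ≤ qFacProd q α r := by
  have h₀ := one_le_qFacFactor hq0 hq1 hα hαr 0
  have h₁ := one_le_qFacProd hq0 hq1 hα (by linarith : α < r + 1)
  rw [qFacProd_eq_mul hq0 hq1 hα hαr]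
  nlinarith

lemma qFacProd_two_mul (hq0 : 0 < q) (hq1 : q < 1) (hα : 0 ≤ α) (hα1 : α < 1) :
    qFacProd q α 2 * (1 - q) = qFacProd q α 1 * (1 - q ^ (1 - α)) := by
  have h := qFacProd_eq_mul (r := 1) hq0 hq1 hα hα1
  have hden : 0 < 1 - q ^ (1 - α) := sub_pos.2 (Real.rpow_lt_one hq0.le hq1 (by linarith))
  norm_num [qFacFactor] at h
  rw [h]
  field_simp

end qFacProd

section qFac

variable {q α : ℝ}

lemma qFac_le_qFac_add_one_left (hq0 : 0 < q) (hq1 : q < 1) (hα : 0 ≤ α) (hα1 : α < 1)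
    {m k : ℤ} (hmk : m + 1 < k) : qFac q α m k ≤ qFac q α (m + 1) k := by
  have hr : (1 : ℝ) ≤ ((k - (m + 1) : ℤ) : ℝ) := by
    exact_mod_cast (by omega : 1 ≤ k - (m + 1))
  have hkm : ((k - m : ℤ) : ℝ) = ((k - (m + 1) : ℤ) : ℝ) + 1 := by push_cast; ring
  have hpow : q ^ (-(m : ℝ) * α) ≤ q ^ (-((m + 1 : ℤ) : ℝ) * α) :=
    Real.rpow_le_rpow_of_exponent_ge hq0 hq1.le (by push_cast; nlinarith)
  rw [qFac_eq_rpow_mul_qFacProd, qFac_eq_rpow_mul_qFacProd, hkm]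
  exact mul_le_mul hpow (qFacProd_add_one_le hq0 hq1 hα (by linarith))
    (zero_le_one.trans (one_le_qFacProd hq0 hq1 hα (by linarith))) (by positivity)

lemma rpow_mul_qFac_sub_qFac (hq0 : 0 < q) (hq1 : q < 1) (hα : 0 ≤ α) (hα1 : α < 1)
    (n : ℤ) :
    q ^ ((n + 1 : ℤ) : ℝ) * (qFac q α n (n + 1 + 1) - qFac q α (n + 1) (n + 1 + 1)) =
      -cq q α * (q ^ (n : ℝ) * qFac q α n (n + 1)) := by
  have h₁ : qFac q α n (n + 1) = q ^ (-(n : ℝ) * α) * qFacProd q α 1 := by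
    rw [qFac_eq_rpow_mul_qFacProd, show ((n + 1 - n : ℤ) : ℝ) = 1 by push_cast; ring]
  have h₂ : qFac q α n (n + 1 + 1) = q ^ (-(n : ℝ) * α) * qFacProd q α 2 := by
    rw [qFac_eq_rpow_mul_qFacProd, show ((n + 1 + 1 - n : ℤ) : ℝ) = 2 by push_cast; ring]
  have h₃ :
      qFac q α (n + 1) (n + 1 + 1) = q ^ (-(n : ℝ) * α) * q ^ (-α) * qFacProd q α 1 := by
    rw [qFac_eq_rpow_mul_qFacProd, ← Real.rpow_add hq0,
      show ((n + 1 + 1 - (n + 1) : ℤ) : ℝ) = 1 by push_cast; ring]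
    congr 2
    push_cast
    ring
  have hn : q ^ ((n + 1 : ℤ) : ℝ) = q ^ (n : ℝ) * q := by
    rw [Int.cast_add, Int.cast_one, Real.rpow_add_one hq0.ne']
  have hsub : q ^ (1 - α) = q * q ^ (-α) := by
    rw [sub_eq_add_neg, Real.rpow_add hq0, Real.rpow_one]
  have hinv : q ^ α * q ^ (-α) = 1 := by
    rw [← Real.rpow_add hq0, add_neg_cancel, Real.rpow_zero]
  have hP := qFacProd_two_mul hq0 hq1 hα hα1
  have hq : 1 - q ≠ 0 := by linarith
  rw [hsub] at hP
  rw [h₁, h₂, h₃, hn, cq, hsub]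
  field_simp
  linear_combination hP - qFacProd q α 1 * hinv

end qFac

lemma qFac_pos {q α : ℝ} (hq0 : 0 < q) (hq1 : q < 1) (hα : 0 ≤ α) (hα1 : α < 1) {m k : ℤ}
    (hmk : m < k) : 0 < qFac q α m k := by
  have hr : (1 : ℝ) ≤ ((k - m : ℤ) : ℝ) := by exact_mod_cast (by omega : 1 ≤ k - m)
  rw [qFac_eq_rpow_mul_qFacProd]
  exact mul_pos (by positivity) (one_pos.trans_le (one_le_qFacProd hq0 hq1 hα (by linarith)))

section S

variable {q α : ℝ} {n0 : ℤ} {y : ℤ → ℝ}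

lemma S_sub_S_add_one {n : ℤ} (hn : n ≤ n0) :
    S q α n0 y n - S q α n0 y (n + 1) = q ^ (n : ℝ) * qFac q α n (n + 1) * y n +
      ∑ i ∈ Finset.Icc (n + 1) n0,
        q ^ (i : ℝ) * (qFac q α n (i + 1) - qFac q α (n + 1) (i + 1)) * y i := by
  rw [S, S, ← Finset.insert_Icc_add_one_left_eq_Icc hn, Finset.sum_insert (by simp),
    add_sub_assoc, ← Finset.sum_sub_distrib]
  congr 1
  exact Finset.sum_congr rfl fun i _ ↦ by ring

lemma mul_sub_cq_mul_le_S_sub_S_add_one (hq0 : 0 < q) (hq1 : q < 1) (hα : 0 ≤ α) (hα1 : α < 1)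
    {n : ℤ} (hn : n < n0) (hy : ∀ i, n < i → i ≤ n0 → y i ≤ 0) :
    q ^ (n : ℝ) * qFac q α n (n + 1) * (y n - cq q α * y (n + 1)) ≤
      S q α n0 y n - S q α n0 y (n + 1) := by
  have hterm : ∀ i ∈ Finset.Icc (n + 1) n0,
      0 ≤ q ^ (i : ℝ) * (qFac q α n (i + 1) - qFac q α (n + 1) (i + 1)) * y i := by
    intro i hi
    rw [Finset.mem_Icc] at hi
    have hle := qFac_le_qFac_add_one_left hq0 hq1 hα hα1 (by omega : n + 1 < i + 1)
    exact mul_nonneg_of_nonpos_of_nonpos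
      (mul_nonpos_of_nonneg_of_nonpos (by positivity) (by linarith)) (hy i (by omega) hi.2)
  have hfirst := Finset.single_le_sum hterm (Finset.mem_Icc.2 ⟨le_rfl, hn⟩)
  rw [S_sub_S_add_one hn.le]
  rw [rpow_mul_qFac_sub_qFac hq0 hq1 hα hα1 n] at hfirst
  linarith

lemma le_cq_mul_of_S_sub_S_add_one_nonpos (hq0 : 0 < q) (hq1 : q < 1) (hα : 0 ≤ α)
    (hα1 : α < 1) {n : ℤ} (hn : n < n0) (hy : ∀ i, n < i → i ≤ n0 → y i ≤ 0)
    (hD : S q α n0 y n - S q α n0 y (n + 1) ≤ 0) :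
    y n ≤ cq q α * y (n + 1) := by
  have hw : 0 < q ^ (n : ℝ) * qFac q α n (n + 1) :=
    mul_pos (by positivity) (qFac_pos hq0 hq1 hα hα1 (lt_add_one n))
  have h := (mul_sub_cq_mul_le_S_sub_S_add_one hq0 hq1 hα hα1 hn hy).trans hD
  linarith [nonpos_of_mul_nonpos_right h hw]

lemma nonpos_of_S_sub_S_add_one_nonpos (hq0 : 0 < q) (hq1 : q < 1) (hα : 0 ≤ α) (hα1 : α < 1)
    (hy : y n0 ≤ 0) (hD : ∀ n, n < n0 → S q α n0 y n - S q α n0 y (n + 1) ≤ 0) :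
    ∀ n ≤ n0, y n ≤ 0 := by
  suffices h : ∀ n ≤ n0, ∀ i, n ≤ i → i ≤ n0 → y i ≤ 0 from fun n hn ↦ h n hn n le_rfl hn
  refine Int.leInductionDown (fun i h₁ h₂ ↦ le_antisymm h₂ h₁ ▸ hy)
    fun n hn ih i h₁ h₂ ↦ ?_
  rcases h₁.lt_or_eq with h₁ | rfl
  · exact ih i (by omega) h₂
  · have hstep := le_cq_mul_of_S_sub_S_add_one_nonpos hq0 hq1 hα hα1 (by omega)
      (fun i h₁ h₂ ↦ ih i (by omega) h₂) (hD (n - 1) (by omega))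
    rw [sub_add_cancel] at hstep
    exact hstep.trans (mul_nonpos_of_nonneg_of_nonpos (cq_nonneg hq0 hq1 hα) (ih n le_rfl hn))

end S

/-- Decreasing version of the monotonicity theorem: if `y(a) ≤ 0`
(with `a = q^{n0}`) and the Riemann q-fractional derivative of order `α ∈ (0,1)`
based at `qa` is nonpositive at every `t = q^n`, `n < n0`, then `y` is
`c_q(α)`-decreasing, where `c_q(α) = q^{1-α}(1-q^α)/(1-q)`. -/
theorem qFrac_antitone (q α : ℝ) (hq0 : 0 < q) (hq1 : q < 1)
    (hα0 : 0 < α) (hα1 : α < 1) (n0 : ℤ) (y : ℤ → ℝ)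
    (hy : y n0 ≤ 0)
    (hD : ∀ n : ℤ, n < n0 → S q α n0 y n - S q α n0 y (n + 1) ≤ 0) :
    ∀ n : ℤ, n ≤ n0 → y (n - 1) ≤ q ^ (1 - α) * (1 - q ^ α) / (1 - q) * y n := by
  have hnonpos := nonpos_of_S_sub_S_add_one_nonpos hq0 hq1 hα0.le hα1 hy hD
  intro n hn
  have h := le_cq_mul_of_S_sub_S_add_one_nonpos hq0 hq1 hα0.le hα1 (by omega : n - 1 < n0)
    (fun i _ hi ↦ hnonpos i hi) (hD (n - 1) (by omega))
  rwa [sub_add_cancel] at h
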